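/- Let G be a topological group, λ a cardinal with index set I_λ, and B_λ(G) = (I_λ × G × I_λ) ∪ {0} the Brandt λ-extension of G with multiplication (α,a,β)(γ,b,δ) = (α, ab, δ) if β = γ and = 0 otherwise, and 0 absorbing. Suppose B_λ(G) carries a topology making it a topological inverse semigroup such that the restriction of the topology to (α, G, α) ∪ {0} makes (α,G,α) homeomorphic to G. Then for all indices α, β, γ, δ ∈ I_λ, the map (α,x,β) ↦ (γ, x, δ) is a homeomorphism from the H-class (α,G,β) onto the H-class (γ,G,δ), and the map (α,x,α) ↦ (γ,x,γ) is a topological group isomorphism of the maximal subgroups (α,G,α) and (γ,G,γ). -/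

import Mathlib

/-- Multiplication of the Brandt `λ`-extension `B_λ(G) = (I × G × I) ∪ {0}`, with
`none` playing the role of the zero. -/
def brandtMul {I G : Type*} [Mul G] [DecidableEq I] :
    Option (I × G × I) → Option (I × G × I) → Option (I × G × I)
  | some (a, g, b), some (c, h, d) => if b = c then some (a, g * h, d) else none
  | _, _ => none

/-- Inversion of the Brandt `λ`-extension: `(α,g,β)⁻¹ = (β,g⁻¹,α)` and `0⁻¹ = 0`. -/
def brandtInv {I G : Type*} [Inv G] : Option (I × G × I) → Option (I × G × I)
  | some (a, g, b) => some (b, g⁻¹, a)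
  | none => none

/-- The non-zero `H`-class `(α, G, β)` of `B_λ(G)`. -/
def Hcl {I : Type*} (G : Type*) (α β : I) : Set (Option (I × G × I)) :=
  {x | ∃ g : G, x = some (α, g, β)}

/-- The translation map `x ↦ (γ,1,α)·x·(β,1,δ)` of `B_λ(G)`. -/
def phi {I G : Type*} [Group G] [DecidableEq I] (γ δ α β : I) (x : Option (I × G × I)) :
    Option (I × G × I) :=
  brandtMul (brandtMul (some (γ, 1, α)) x) (some (β, 1, δ))

/-!
The map `(α,x,β) ↦ (γ,x,δ)` is the two-sided translation `x ↦ (γ,1,α)·x·(β,1,δ)`, which is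
continuous as soon as multiplication is; translating back by `(α,1,γ)` and `(δ,1,β)` inverts it
on the `H`-class. On a maximal subgroup it is multiplicative because `(α,1,α)` is its identity.
-/

section Brandt

variable {I G : Type*} [Group G] [DecidableEq I]

@[simp]
lemma phi_some (γ δ α β : I) (g : G) : phi γ δ α β (some (α, g, β)) = some (γ, g, δ) := by
  simp [phi, brandtMul]

lemma mapsTo_phi_Hcl (γ δ α β : I) : Set.MapsTo (phi γ δ α β) (Hcl G α β) (Hcl G γ δ) := by
  rintro x ⟨g, rfl⟩
  exact ⟨g, phi_some γ δ α β g⟩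

lemma phi_phi_of_mem_Hcl {γ δ α β : I} {x : Option (I × G × I)} (hx : x ∈ Hcl G α β) :
    phi α β γ δ (phi γ δ α β x) = x := by
  obtain ⟨g, rfl⟩ := hx
  simp

lemma phi_brandtMul_of_mem_Hcl {γ δ η α β ε : I} {x y : Option (I × G × I)}
    (hx : x ∈ Hcl G α ε) (hy : y ∈ Hcl G ε β) :
    phi γ δ α β (brandtMul x y) = brandtMul (phi γ η α ε x) (phi η δ ε β y) := by
  obtain ⟨g, rfl⟩ := hx
  obtain ⟨h, rfl⟩ := hy
  simp [brandtMul]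

def phiEquiv (γ δ α β : I) : Hcl G α β ≃ Hcl G γ δ where
  toFun x := ⟨phi γ δ α β x, mapsTo_phi_Hcl γ δ α β x.2⟩
  invFun y := ⟨phi α β γ δ y, mapsTo_phi_Hcl α β γ δ y.2⟩
  left_inv x := Subtype.ext (phi_phi_of_mem_Hcl x.2)
  right_inv y := Subtype.ext (phi_phi_of_mem_Hcl y.2)

variable [TopologicalSpace (Option (I × G × I))]
  (hmul : Continuous fun p : Option (I × G × I) × Option (I × G × I) => brandtMul p.1 p.2)
include hmul

lemma continuous_phi (γ δ α β : I) : Continuous (phi (G := G) γ δ α β) :=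
  hmul.comp ((hmul.comp (continuous_const.prodMk continuous_id)).prodMk continuous_const)

def phiHomeomorph (γ δ α β : I) : Hcl G α β ≃ₜ Hcl G γ δ where
  toEquiv := phiEquiv γ δ α β
  continuous_toFun := ((continuous_phi hmul γ δ α β).comp continuous_subtype_val).subtype_mk _
  continuous_invFun := ((continuous_phi hmul α β γ δ).comp continuous_subtype_val).subtype_mk _

lemma coe_phiHomeomorph_apply (γ δ α β : I) (x : Hcl G α β) :
    (phiHomeomorph hmul γ δ α β x : Option (I × G × I)) = phi γ δ α β x :=
  rfl

end Brandt

theorem stmt_5_general {I G : Type*} [Group G] [DecidableEq I] [TopologicalSpace (Option (I × G × I))]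
    (hmul : Continuous fun p : Option (I × G × I) × Option (I × G × I) =>
      brandtMul p.1 p.2)
    (α β γ δ : I) :
    Set.MapsTo (phi γ δ α β) (Hcl G α β) (Hcl G γ δ) ∧
    (∃ h : ↥(Hcl G α β) ≃ₜ ↥(Hcl G γ δ),
      ∀ x : ↥(Hcl G α β), (h x : Option (I × G × I)) = phi γ δ α β ↑x) ∧
    (∃ h : ↥(Hcl G α α) ≃ₜ ↥(Hcl G γ γ),
      (∀ x : ↥(Hcl G α α), (h x : Option (I × G × I)) = phi γ γ α α ↑x) ∧
      ∀ x y : Option (I × G × I), x ∈ Hcl G α α → y ∈ Hcl G α α →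
        phi γ γ α α (brandtMul x y) = brandtMul (phi γ γ α α x) (phi γ γ α α y)) :=
  ⟨mapsTo_phi_Hcl γ δ α β,
    ⟨phiHomeomorph hmul γ δ α β, coe_phiHomeomorph_apply hmul γ δ α β⟩,
    ⟨phiHomeomorph hmul γ γ α α, coe_phiHomeomorph_apply hmul γ γ α α,
      fun _ _ hx hy => phi_brandtMul_of_mem_Hcl hx hy⟩⟩

/-- If a topological Brandt `λ`-extension `B_λ(G)` of a topological group
`G` is a topological inverse semigroup whose topology restricts on a maximal subgroup
`(α₀, G, α₀)` to the topology of `G`, then for all `α, β, γ, δ` the map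
`(α,x,β) ↦ (γ,x,δ)` is a homeomorphism of the `H`-class `(α,G,β)` onto `(γ,G,δ)`, and
`(α,x,α) ↦ (γ,x,γ)` is a topological group isomorphism of `(α,G,α)` onto `(γ,G,γ)`. -/
theorem stmt_5 {I G : Type*} [Group G] [DecidableEq I] [TopologicalSpace G]
    [IsTopologicalGroup G] [TopologicalSpace (Option (I × G × I))]
    [T2Space (Option (I × G × I))]
    (hmul : Continuous fun p : Option (I × G × I) × Option (I × G × I) =>
      brandtMul p.1 p.2)
    (hinv : Continuous (brandtInv (I := I) (G := G)))
    (hrestr : ∃ α₀ : I,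
      Topology.IsEmbedding fun g : G => (some (α₀, g, α₀) : Option (I × G × I)))
    (α β γ δ : I) :
    Set.MapsTo (phi γ δ α β) (Hcl G α β) (Hcl G γ δ) ∧
    (∃ h : ↥(Hcl G α β) ≃ₜ ↥(Hcl G γ δ),
      ∀ x : ↥(Hcl G α β), (h x : Option (I × G × I)) = phi γ δ α β ↑x) ∧
    (∃ h : ↥(Hcl G α α) ≃ₜ ↥(Hcl G γ γ),
      (∀ x : ↥(Hcl G α α), (h x : Option (I × G × I)) = phi γ γ α α ↑x) ∧
      ∀ x y : Option (I × G × I), x ∈ Hcl G α α → y ∈ Hcl G α α →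
        phi γ γ α α (brandtMul x y) = brandtMul (phi γ γ α α x) (phi γ γ α α y)) :=
  stmt_5_general hmul α β γ δ
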